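/- arXiv:1703.00887 — 4 statements merged into one kernel-verified Lean document; each statement's English description precedes it below -/
import Mathlib

section
/- For any x ≥ 0, the Gamma function satisfies Γ(x+1)/Γ(x+1/2) < √(x + 1/2). -/
/-- Gautschi-type inequality (non-strict), from log-convexity of Γ. -/
lemma gautschi_le (y : ℝ) (hy : 0 ≤ y) :
    Real.Gamma (y + 1) ≤ Real.Gamma (y + 1/2) * Real.sqrt (y + 1/2) := by
  have ha : (0:ℝ) < y + 1/2 := by linarith
  have hb : (0:ℝ) < y + 3/2 := by linarith
  have hm : (0:ℝ) < y + 1 := by linarith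
  have hGa := Real.Gamma_pos_of_pos ha
  have hGb := Real.Gamma_pos_of_pos hb
  have hGm := Real.Gamma_pos_of_pos hm
  have h := Real.convexOn_log_Gamma.2 (Set.mem_Ioi.2 ha) (Set.mem_Ioi.2 hb)
    (by norm_num : (0:ℝ) ≤ 1/2) (by norm_num : (0:ℝ) ≤ 1/2) (by norm_num)
  simp only [smul_eq_mul, Function.comp_apply] at h
  rw [show 1/2 * (y + 1/2) + 1/2 * (y + 3/2) = y + 1 by ring] at h
  have h2 : Real.log ((Real.Gamma (y+1))^2) ≤
      Real.log (Real.Gamma (y+1/2) * Real.Gamma (y+3/2)) := by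
    rw [Real.log_pow, Real.log_mul hGa.ne' hGb.ne']
    push_cast
    linarith
  have h3 : (Real.Gamma (y+1))^2 ≤ Real.Gamma (y+1/2) * Real.Gamma (y+3/2) :=
    (Real.log_le_log_iff (by positivity) (by positivity)).mp h2
  have hGb' : Real.Gamma (y+3/2) = (y+1/2) * Real.Gamma (y+1/2) := by
    rw [show y + 3/2 = (y+1/2) + 1 by ring, Real.Gamma_add_one ha.ne']
  have h4 : (Real.Gamma (y+1))^2 ≤ (Real.Gamma (y+1/2) * Real.sqrt (y+1/2))^2 := by
    have hs : (Real.sqrt (y+1/2))^2 = y + 1/2 := Real.sq_sqrt ha.le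
    nlinarith [h3, hGb', hs, hGa, mul_pos hGa hGa]
  have := Real.sqrt_le_sqrt h4
  rwa [Real.sqrt_sq hGm.le, Real.sqrt_sq (by positivity)] at this

/-- For any `x ≥ 0`, the Gamma function satisfies
`Γ(x+1)/Γ(x+1/2) < √(x + 1/2)`. -/
theorem Gamma_ratio_lt_sqrt (x : ℝ) (hx : 0 ≤ x) :
    Real.Gamma (x + 1) / Real.Gamma (x + 1 / 2) < Real.sqrt (x + 1 / 2) := by
  have ha : (0:ℝ) < x + 1/2 := by linarith
  have hGa := Real.Gamma_pos_of_pos ha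
  have hGm := Real.Gamma_pos_of_pos (show (0:ℝ) < x + 1 by linarith)
  have h := gautschi_le (x+1) (by linarith)
  rw [show x + 1 + 1 = (x+1) + 1 by ring, Real.Gamma_add_one (by positivity : x+1 ≠ 0),
    show x + 1 + 1/2 = (x+1/2) + 1 by ring, Real.Gamma_add_one ha.ne'] at h
  rw [show x + 1/2 + 1 = x + 1 + 1/2 by ring] at h
  have hs : (Real.sqrt (x+1/2))^2 = x + 1/2 := Real.sq_sqrt ha.le
  have ht : (Real.sqrt (x+1+1/2))^2 = x + 3/2 := by
    rw [Real.sq_sqrt (by linarith)]; ring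
  have hspos : 0 < Real.sqrt (x+1/2) := Real.sqrt_pos.2 ha
  have htpos : 0 < Real.sqrt (x+1+1/2) := Real.sqrt_pos.2 (by linarith)
  rw [div_lt_iff₀ hGa]
  -- key: (x+1/2) * √(x+3/2) < (x+1) * √(x+1/2)
  have key : (x+1/2) * Real.sqrt (x+1+1/2) < (x+1) * Real.sqrt (x+1/2) := by
    nlinarith [hs, ht, hspos, htpos, sq_nonneg (Real.sqrt (x+1+1/2) - Real.sqrt (x+1/2)),
      mul_pos hspos htpos]
  nlinarith [mul_lt_mul_of_pos_right key hGa, mul_pos hGa hspos]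
end

section
/- Let f satisfy the (α, β)-regularity condition in a ζ-neighborhood of the set of local minima X*. Then gradient descent with step size η = 1/β started in the neighborhood satisfies dist(x_{t+1}, X*)² ≤ (1 - α/β)·dist(x_t, X*)², so iterates stay in the neighborhood and converge linearly. -/
/-! Expanding `‖a - β⁻¹ g‖²` with `a = x - P x` and `g = ∇f(x)`, the regularity inequality cancels
the gradient terms exactly and leaves `(1 - α/β)‖a‖²`. Since `P x` is still a point of `X*`,
`dist(x - β⁻¹ g, X*) ≤ ‖a - β⁻¹ g‖`, so the squared distance contracts by `1 - α/β ≤ 1`; in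
particular the iterates never leave the `ζ`-neighbourhood, where the regularity applies again. -/

open scoped RealInnerProductSpace

section GradientStep

variable {E : Type*} [NormedAddCommGroup E] [InnerProductSpace ℝ E]

theorem norm_sub_smul_sq_le_of_regularity {α β : ℝ} (hβ : 0 < β) {a g : E}
    (hreg : α / 2 * ‖a‖ ^ 2 + 1 / (2 * β) * ‖g‖ ^ 2 ≤ ⟪g, a⟫) :
    ‖a - (1 / β) • g‖ ^ 2 ≤ (1 - α / β) * ‖a‖ ^ 2 := by
  have hexpand : ‖a - (1 / β) • g‖ ^ 2 = ‖a‖ ^ 2 - 2 / β * ⟪g, a⟫ + ‖g‖ ^ 2 / β ^ 2 := by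
    rw [norm_sub_sq_real, real_inner_smul_right, norm_smul, mul_pow, real_inner_comm,
      Real.norm_of_nonneg (by positivity)]
    ring
  have hscaled := mul_le_mul_of_nonneg_left hreg (by positivity : (0 : ℝ) ≤ 2 / β)
  rw [hexpand]
  calc ‖a‖ ^ 2 - 2 / β * ⟪g, a⟫ + ‖g‖ ^ 2 / β ^ 2
      ≤ ‖a‖ ^ 2 - 2 / β * (α / 2 * ‖a‖ ^ 2 + 1 / (2 * β) * ‖g‖ ^ 2) + ‖g‖ ^ 2 / β ^ 2 := by
        linarith
    _ = (1 - α / β) * ‖a‖ ^ 2 := by field_simp; ring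

theorem dist_sq_le_of_gradient_step {S : Set E} {P : E → E}
    (hP : ∀ x, P x ∈ S ∧ ∀ y ∈ S, ‖x - P x‖ ≤ ‖x - y‖) {α β : ℝ} (hβ : 0 < β) {x g : E}
    (hreg : α / 2 * ‖x - P x‖ ^ 2 + 1 / (2 * β) * ‖g‖ ^ 2 ≤ ⟪g, x - P x⟫) :
    ‖x - (1 / β) • g - P (x - (1 / β) • g)‖ ^ 2 ≤ (1 - α / β) * ‖x - P x‖ ^ 2 := by
  set y := x - (1 / β) • g
  have hnearest : ‖y - P y‖ ≤ ‖(x - P x) - (1 / β) • g‖ := by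
    calc ‖y - P y‖ ≤ ‖y - P x‖ := (hP y).2 (P x) (hP x).1
      _ = ‖(x - P x) - (1 / β) • g‖ := by rw [sub_right_comm]
  calc ‖y - P y‖ ^ 2 ≤ ‖(x - P x) - (1 / β) • g‖ ^ 2 := by gcongr
    _ ≤ (1 - α / β) * ‖x - P x‖ ^ 2 := norm_sub_smul_sq_le_of_regularity hβ hreg

end GradientStep

theorem forall_le_and_sq_le_of_sq_contraction {r : ℕ → ℝ} {c ζ : ℝ} (hr : ∀ t, 0 ≤ r t)
    (hc : c ≤ 1) (h0 : r 0 ≤ ζ) (hstep : ∀ t, r t ≤ ζ → r (t + 1) ^ 2 ≤ c * r t ^ 2) :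
    ∀ t, r t ≤ ζ ∧ r (t + 1) ^ 2 ≤ c * r t ^ 2 := by
  intro t
  induction t with
  | zero => exact ⟨h0, hstep 0 h0⟩
  | succ n ih =>
    have hsq : r (n + 1) ^ 2 ≤ r n ^ 2 :=
      ih.2.trans (mul_le_of_le_one_left (sq_nonneg _) hc)
    have hnext : r (n + 1) ≤ ζ :=
      ((pow_le_pow_iff_left₀ (hr _) (hr _) two_ne_zero).1 hsq).trans ih.1
    exact ⟨hnext, hstep (n + 1) hnext⟩

theorem regularity_linear_convergence_general {d : ℕ}
    (f : EuclideanSpace ℝ (Fin d) → ℝ) (α β ζ : ℝ)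
    (hα : 0 < α) (hβ : 0 < β)
    (Xstar : Set (EuclideanSpace ℝ (Fin d)))
    (P : EuclideanSpace ℝ (Fin d) → EuclideanSpace ℝ (Fin d))
    (hP : ∀ x, P x ∈ Xstar ∧ ∀ y ∈ Xstar, ‖x - P x‖ ≤ ‖x - y‖)
    -- `(α, β)`-regularity condition in the `ζ`-neighborhood of `X*`:
    (hreg : ∀ x, ‖x - P x‖ ≤ ζ →
      α / 2 * ‖x - P x‖ ^ 2 + 1 / (2 * β) * ‖gradient f x‖ ^ 2 ≤
        (inner ℝ (gradient f x) (x - P x) : ℝ))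
    (x : ℕ → EuclideanSpace ℝ (Fin d))
    (hstep : ∀ t, x (t + 1) = x t - (1 / β) • gradient f (x t))
    (hx0 : ‖x 0 - P (x 0)‖ ≤ ζ) :
    ∀ t : ℕ, ‖x t - P (x t)‖ ≤ ζ ∧
      ‖x (t + 1) - P (x (t + 1))‖ ^ 2 ≤ (1 - α / β) * ‖x t - P (x t)‖ ^ 2 := by
  have hrate : 1 - α / β ≤ 1 := sub_le_self _ (div_pos hα hβ).le
  refine forall_le_and_sq_le_of_sq_contraction (fun _ ↦ norm_nonneg _) hrate hx0 fun t ht ↦ ?_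
  rw [hstep t]
  exact dist_sq_le_of_gradient_step hP hβ (hreg (x t) ht)

/-- If `f` satisfies the `(α, β)`-regularity condition in a `ζ`-neighborhood
of the set of local minima `X*`, then gradient descent with step size `1/β`
started in the neighborhood stays in the neighborhood and satisfies
`dist(x_{t+1}, X*)² ≤ (1 - α/β)·dist(x_t, X*)²`. -/
theorem regularity_linear_convergence {d : ℕ}
    (f : EuclideanSpace ℝ (Fin d) → ℝ) (α β ζ : ℝ)
    (hα : 0 < α) (hβ : 0 < β) (hαβ : α ≤ β) (hζ : 0 < ζ)
    (Xstar : Set (EuclideanSpace ℝ (Fin d)))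
    (P : EuclideanSpace ℝ (Fin d) → EuclideanSpace ℝ (Fin d))
    (hP : ∀ x, P x ∈ Xstar ∧ ∀ y ∈ Xstar, ‖x - P x‖ ≤ ‖x - y‖)
    -- `(α, β)`-regularity condition in the `ζ`-neighborhood of `X*`:
    (hreg : ∀ x, ‖x - P x‖ ≤ ζ →
      α / 2 * ‖x - P x‖ ^ 2 + 1 / (2 * β) * ‖gradient f x‖ ^ 2 ≤
        (inner ℝ (gradient f x) (x - P x) : ℝ))
    (x : ℕ → EuclideanSpace ℝ (Fin d))
    (hstep : ∀ t, x (t + 1) = x t - (1 / β) • gradient f (x t))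
    (hx0 : ‖x 0 - P (x 0)‖ ≤ ζ) :
    ∀ t : ℕ, ‖x t - P (x t)‖ ≤ ζ ∧
      ‖x (t + 1) - P (x (t + 1))‖ ^ 2 ≤ (1 - α / β) * ‖x t - P (x t)‖ ^ 2 :=
  regularity_linear_convergence_general f α β ζ hα hβ Xstar P hP hreg x hstep hx0
end

section
/- For any Γ ≥ σ₁(M*), the function f(U) = (1/2)‖UUᵀ - M*‖_F² is 12Γ^{1/2}-Hessian Lipschitz inside {U : ‖U‖² < Γ}: for all U, V in this region and all Z with ‖Z‖_F ≤ 1, |∇²f(U)(Z,Z) - ∇²f(V)(Z,Z)| ≤ 12Γ^{1/2}‖U - V‖_F. -/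
/-!
Write `S_W = WZᵀ + ZWᵀ`. The difference of the two Hessian forms is `‖S_U‖² - ‖S_V‖²`
plus `2⟨UUᵀ - VVᵀ, ZZᵀ⟩`, since `M` cancels. The first part is at most
`‖S_U - S_V‖ (‖S_U‖ + ‖S_V‖) ≤ 2‖U - V‖‖Z‖ · 4√Γ‖Z‖` and the second at most
`2‖UUᵀ - VVᵀ‖‖ZZᵀ‖ ≤ 4√Γ‖U - V‖‖Z‖²` (Frobenius norms throughout), both resting on the
mixed bound `‖AB‖_F ≤ ‖A‖₂‖B‖_F`.
-/

open Matrix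

/-- The Frobenius norm of a real matrix. -/
noncomputable def frob {m n : ℕ} (A : Matrix (Fin m) (Fin n) ℝ) : ℝ :=
  Real.sqrt (∑ i, ∑ j, (A i j) ^ 2)

/-- The spectral (operator) norm of a real matrix. -/
noncomputable def spec {m n : ℕ} (A : Matrix (Fin m) (Fin n) ℝ) : ℝ :=
  ‖LinearMap.toContinuousLinearMap (Matrix.toEuclideanLin A)‖

/-- The trace inner product `⟨A, B⟩ = tr(AᵀB)`. -/
def mip {m n : ℕ} (A B : Matrix (Fin m) (Fin n) ℝ) : ℝ :=
  (Aᵀ * B).trace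

/-- The Hessian quadratic form of `f(U) = (1/2)‖UUᵀ - M‖_F²`:
`∇²f(U)(Z,Z) = ‖UZᵀ + ZUᵀ‖_F² + 2⟨UUᵀ - M, ZZᵀ⟩`. -/
noncomputable def hessf {d r : ℕ} (M : Matrix (Fin d) (Fin d) ℝ)
    (U Z : Matrix (Fin d) (Fin r) ℝ) : ℝ :=
  frob (U * Zᵀ + Z * Uᵀ) ^ 2 + 2 * mip (U * Uᵀ - M) (Z * Zᵀ)

theorem abs_norm_sq_sub_norm_sq_le {E : Type*} [SeminormedAddCommGroup E] (a b : E) :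
    |‖a‖ ^ 2 - ‖b‖ ^ 2| ≤ ‖a - b‖ * (‖a‖ + ‖b‖) := by
  rw [sq_sub_sq, abs_mul, abs_of_nonneg (by positivity : 0 ≤ ‖a‖ + ‖b‖), mul_comm]
  exact mul_le_mul_of_nonneg_right (abs_norm_sub_norm_le a b) (by positivity)

section Frobenius

open scoped Matrix.Norms.Frobenius

variable {m n p : ℕ}

theorem frob_eq_norm (A : Matrix (Fin m) (Fin n) ℝ) : frob A = ‖A‖ := by
  simp only [frob, frobenius_norm_def, Real.norm_eq_abs, ← Real.sqrt_eq_rpow, Real.rpow_two, sq_abs]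

theorem frob_nonneg (A : Matrix (Fin m) (Fin n) ℝ) : 0 ≤ frob A := Real.sqrt_nonneg _

theorem frob_add_le (A B : Matrix (Fin m) (Fin n) ℝ) : frob (A + B) ≤ frob A + frob B := by
  simpa only [frob_eq_norm] using norm_add_le A B

theorem frob_neg (A : Matrix (Fin m) (Fin n) ℝ) : frob (-A) = frob A := by
  simp only [frob_eq_norm, norm_neg]

theorem frob_transpose (A : Matrix (Fin m) (Fin n) ℝ) : frob Aᵀ = frob A := by
  simp only [frob_eq_norm, frobenius_norm_transpose]

theorem frob_mul_le (A : Matrix (Fin m) (Fin n) ℝ) (B : Matrix (Fin n) (Fin p) ℝ) :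
    frob (A * B) ≤ frob A * frob B := by
  simpa only [frob_eq_norm] using frobenius_norm_mul A B

theorem abs_frob_sq_sub_frob_sq_le (A B : Matrix (Fin m) (Fin n) ℝ) :
    |frob A ^ 2 - frob B ^ 2| ≤ frob (A - B) * (frob A + frob B) := by
  simpa only [frob_eq_norm] using abs_norm_sq_sub_norm_sq_le A B

end Frobenius

section
variable {m n p : ℕ}

theorem frob_sq_eq_sum_norm_col_sq (A : Matrix (Fin m) (Fin n) ℝ) :
    frob A ^ 2 = ∑ j, ‖WithLp.toLp 2 (Aᵀ j)‖ ^ 2 := by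
  rw [← frob_transpose, frob, Real.sq_sqrt (by positivity)]
  simp only [EuclideanSpace.norm_sq_eq, Real.norm_eq_abs, sq_abs]

theorem spec_nonneg (A : Matrix (Fin m) (Fin n) ℝ) : 0 ≤ spec A := norm_nonneg _

theorem norm_toLp_mulVec_le (A : Matrix (Fin m) (Fin n) ℝ) (x : Fin n → ℝ) :
    ‖WithLp.toLp 2 (A *ᵥ x)‖ ≤ spec A * ‖WithLp.toLp 2 x‖ :=
  (LinearMap.toContinuousLinearMap (toEuclideanLin A)).le_opNorm _

theorem frob_mul_le_spec_mul_frob (A : Matrix (Fin m) (Fin n) ℝ) (B : Matrix (Fin n) (Fin p) ℝ) :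
    frob (A * B) ≤ spec A * frob B := by
  rw [← pow_le_pow_iff_left₀ (frob_nonneg _) (mul_nonneg (spec_nonneg A) (frob_nonneg B))
    two_ne_zero, mul_pow, frob_sq_eq_sum_norm_col_sq, frob_sq_eq_sum_norm_col_sq, Finset.mul_sum]
  gcongr with j
  have hcol : (A * B)ᵀ j = A *ᵥ Bᵀ j := by
    ext i
    simp [mulVec, dotProduct, mul_apply]
  rw [← mul_pow, hcol]
  gcongr
  exact norm_toLp_mulVec_le A _

theorem mip_eq_sum (A B : Matrix (Fin m) (Fin n) ℝ) : mip A B = ∑ i, ∑ j, A i j * B i j := by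
  simp only [mip, trace, diag, mul_apply, transpose_apply]
  exact Finset.sum_comm

theorem mip_le_frob_mul_frob (A B : Matrix (Fin m) (Fin n) ℝ) : mip A B ≤ frob A * frob B := by
  simpa only [mip_eq_sum, frob, Fintype.sum_prod_type] using
    Real.sum_mul_le_sqrt_mul_sqrt Finset.univ (fun q : Fin m × Fin n => A q.1 q.2)
      (fun q => B q.1 q.2)

theorem mip_neg_left (A B : Matrix (Fin m) (Fin n) ℝ) : mip (-A) B = -mip A B := by
  simp [mip]

theorem abs_mip_le (A B : Matrix (Fin m) (Fin n) ℝ) : |mip A B| ≤ frob A * frob B := by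
  refine abs_le.2 ⟨?_, mip_le_frob_mul_frob A B⟩
  have := mip_le_frob_mul_frob (-A) B
  rw [mip_neg_left, frob_neg] at this
  linarith

theorem mip_sub_left (A B C : Matrix (Fin m) (Fin n) ℝ) : mip (A - B) C = mip A C - mip B C := by
  simp [mip, transpose_sub, Matrix.sub_mul, trace_sub]

theorem frob_add_transpose_le (A : Matrix (Fin n) (Fin n) ℝ) : frob (A + Aᵀ) ≤ 2 * frob A := by
  linarith [frob_add_le A Aᵀ, frob_transpose A]

end

section
variable {d r : ℕ}

theorem frob_mul_transpose_add_le (W Z : Matrix (Fin d) (Fin r) ℝ) :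
    frob (W * Zᵀ + Z * Wᵀ) ≤ 2 * frob (W * Zᵀ) := by
  simpa only [transpose_mul, transpose_transpose] using frob_add_transpose_le (W * Zᵀ)

theorem frob_mul_transpose_le_spec_mul_frob (W Z : Matrix (Fin d) (Fin r) ℝ) :
    frob (W * Zᵀ) ≤ spec W * frob Z :=
  (frob_mul_le_spec_mul_frob W Zᵀ).trans_eq (by rw [frob_transpose])

theorem abs_sq_frob_mul_transpose_add_sub_le {U V : Matrix (Fin d) (Fin r) ℝ}
    (Z : Matrix (Fin d) (Fin r) ℝ) {s : ℝ} (hU : spec U ≤ s) (hV : spec V ≤ s) :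
    |frob (U * Zᵀ + Z * Uᵀ) ^ 2 - frob (V * Zᵀ + Z * Vᵀ) ^ 2| ≤
      8 * s * frob (U - V) * frob Z ^ 2 := by
  have hZ := frob_nonneg Z
  have hbound {W : Matrix (Fin d) (Fin r) ℝ} (hW : spec W ≤ s) :
      frob (W * Zᵀ + Z * Wᵀ) ≤ 2 * (s * frob Z) :=
    (frob_mul_transpose_add_le W Z).trans <| by
      gcongr
      exact (frob_mul_transpose_le_spec_mul_frob W Z).trans (by gcongr)
  have hsub : U * Zᵀ + Z * Uᵀ - (V * Zᵀ + Z * Vᵀ) = (U - V) * Zᵀ + Z * (U - V)ᵀ := by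
    rw [transpose_sub, Matrix.sub_mul, Matrix.mul_sub]
    abel
  have hdiff : frob ((U - V) * Zᵀ + Z * (U - V)ᵀ) ≤ 2 * (frob (U - V) * frob Z) :=
    (frob_mul_transpose_add_le _ Z).trans <| by
      gcongr
      exact (frob_mul_le _ _).trans_eq (by rw [frob_transpose])
  calc _ ≤ frob (U * Zᵀ + Z * Uᵀ - (V * Zᵀ + Z * Vᵀ)) *
        (frob (U * Zᵀ + Z * Uᵀ) + frob (V * Zᵀ + Z * Vᵀ)) := abs_frob_sq_sub_frob_sq_le _ _
    _ ≤ 2 * (frob (U - V) * frob Z) * (2 * (s * frob Z) + 2 * (s * frob Z)) := by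
        rw [hsub]
        exact mul_le_mul hdiff (add_le_add (hbound hU) (hbound hV))
          (add_nonneg (frob_nonneg _) (frob_nonneg _))
          (mul_nonneg zero_le_two (mul_nonneg (frob_nonneg _) hZ))
    _ = 8 * s * frob (U - V) * frob Z ^ 2 := by ring

theorem abs_mip_mul_transpose_sub_le {U V : Matrix (Fin d) (Fin r) ℝ}
    (M : Matrix (Fin d) (Fin d) ℝ) (Z : Matrix (Fin d) (Fin r) ℝ) {s : ℝ}
    (hU : spec U ≤ s) (hV : spec V ≤ s) :
    |mip (U * Uᵀ - M) (Z * Zᵀ) - mip (V * Vᵀ - M) (Z * Zᵀ)| ≤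
      2 * s * frob (U - V) * frob Z ^ 2 := by
  have hsub : U * Uᵀ - V * Vᵀ = U * (U - V)ᵀ + (V * (U - V)ᵀ)ᵀ := by
    rw [transpose_mul, transpose_transpose, transpose_sub, Matrix.mul_sub, Matrix.sub_mul]
    abel
  have hUV : frob (U * Uᵀ - V * Vᵀ) ≤ 2 * s * frob (U - V) := by
    rw [hsub]
    calc _ ≤ frob (U * (U - V)ᵀ) + frob (V * (U - V)ᵀ) :=
          (frob_add_le _ _).trans_eq (by rw [frob_transpose])
      _ ≤ spec U * frob (U - V) + spec V * frob (U - V) := by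
          gcongr <;> exact frob_mul_transpose_le_spec_mul_frob _ _
      _ ≤ 2 * s * frob (U - V) := by nlinarith [frob_nonneg (U - V)]
  have hZZ : frob (Z * Zᵀ) ≤ frob Z ^ 2 :=
    (frob_mul_le Z Zᵀ).trans_eq (by rw [frob_transpose, sq])
  rw [← mip_sub_left, sub_sub_sub_cancel_right]
  calc _ ≤ frob (U * Uᵀ - V * Vᵀ) * frob (Z * Zᵀ) := abs_mip_le _ _
    _ ≤ 2 * s * frob (U - V) * frob Z ^ 2 := by
        have hs := (spec_nonneg U).trans hU
        have hD := frob_nonneg (U - V)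
        gcongr
        exact frob_nonneg _

theorem abs_hessf_sub_hessf_le {U V : Matrix (Fin d) (Fin r) ℝ}
    (M : Matrix (Fin d) (Fin d) ℝ) (Z : Matrix (Fin d) (Fin r) ℝ) {s : ℝ}
    (hU : spec U ≤ s) (hV : spec V ≤ s) :
    |hessf M U Z - hessf M V Z| ≤ 12 * s * frob (U - V) * frob Z ^ 2 := by
  have hsplit : hessf M U Z - hessf M V Z =
      (frob (U * Zᵀ + Z * Uᵀ) ^ 2 - frob (V * Zᵀ + Z * Vᵀ) ^ 2) +
        2 * (mip (U * Uᵀ - M) (Z * Zᵀ) - mip (V * Vᵀ - M) (Z * Zᵀ)) := by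
    unfold hessf
    ring
  rw [hsplit]
  refine (abs_add_le _ _).trans ?_
  rw [abs_mul, abs_two]
  linarith [abs_sq_frob_mul_transpose_add_sub_le Z hU hV, abs_mip_mul_transpose_sub_le M Z hU hV]

end

theorem matrix_factorization_hessian_lipschitz_general {d r : ℕ}
    (M : Matrix (Fin d) (Fin d) ℝ)
    (Γ : ℝ)
    (U V Z : Matrix (Fin d) (Fin r) ℝ)
    (hU : spec U ^ 2 < Γ) (hV : spec V ^ 2 < Γ) (hZ : frob Z ≤ 1) :
    |hessf M U Z - hessf M V Z| ≤ 12 * Real.sqrt Γ * frob (U - V) := by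
  have hspec_le {W : Matrix (Fin d) (Fin r) ℝ} (hW : spec W ^ 2 < Γ) : spec W ≤ Real.sqrt Γ :=
    Real.le_sqrt_of_sq_le hW.le
  have hZsq : frob Z ^ 2 ≤ 1 := pow_le_one₀ (frob_nonneg Z) hZ
  calc _ ≤ 12 * Real.sqrt Γ * frob (U - V) * frob Z ^ 2 :=
        abs_hessf_sub_hessf_le M Z (hspec_le hU) (hspec_le hV)
    _ ≤ 12 * Real.sqrt Γ * frob (U - V) * 1 := by
        have hD := frob_nonneg (U - V)
        gcongr
    _ = 12 * Real.sqrt Γ * frob (U - V) := mul_one _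

/-- For any `Γ ≥ σ₁(M*)`, the function `f(U) = (1/2)‖UUᵀ - M*‖_F²` is
`12Γ^{1/2}`-Hessian Lipschitz inside `{U : ‖U‖² < Γ}`. -/
theorem matrix_factorization_hessian_lipschitz {d r : ℕ}
    (M : Matrix (Fin d) (Fin d) ℝ) (hM : M.PosSemidef)
    (Γ : ℝ) (hΓ : spec M ≤ Γ)
    (U V Z : Matrix (Fin d) (Fin r) ℝ)
    (hU : spec U ^ 2 < Γ) (hV : spec V ^ 2 < Γ) (hZ : frob Z ≤ 1) :
    |hessf M U Z - hessf M V Z| ≤ 12 * Real.sqrt Γ * frob (U - V) :=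
  matrix_factorization_hessian_lipschitz_general M Γ U V Z hU hV hZ
end

section
/- Let M* = V*V*ᵀ be symmetric PSD of rank r, U ∈ ℝ^{d×r}, U* = P_{X*}(U) the closest point of U in X* = {V*R : R orthogonal}, and Δ = U - U*. Then 3‖UUᵀ - M*‖_F² - ‖ΔΔᵀ‖_F² ≥ (4√3 - 6)·σ_r(M*)·‖Δ‖_F². -/
open Matrix

/-!
Optimality of `U* = V* R₀` among all `V* R` makes `S = U*ᵀ U` symmetric positive semidefinite:
comparing with `U* H` for a Householder reflection `H` gives `vᵀ S v ≥ 0`, and comparing with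
`U* G` for a Givens rotation `G` forces `Sᵢⱼ = Sⱼᵢ`.
With `P = Δᵀ Δ`, `D = Uᵀ Δ` and `Q = U*ᵀ U*` (so that `S = D + Q - P`), expanding the Frobenius
norms gives `3‖UUᵀ - M*‖² - ‖ΔΔᵀ‖² = 6 tr D² + 6 tr PQ - 4 tr P²`. Now `tr PS ≥ 0` gives
`tr P² ≤ tr PD + tr PQ`, Cauchy–Schwarz gives `(tr PD)² ≤ tr P² · tr D²`, and eliminating
`tr D²` leaves `(4√3 - 6) tr PQ`, which is at least `(4√3 - 6) σ_r tr P` because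
`Q = R₀ᵀ (V*ᵀ V*) R₀ ≥ σ_r I`.
-/

lemma four_sqrt_three_sub_six_mul_le {x y w m : ℝ} (hw : 0 ≤ w) (hm : 0 ≤ m)
    (hxy : x ≤ y + m) (hy : y ^ 2 ≤ x * w) : (4 * √3 - 6) * m ≤ 6 * w + 6 * m - 4 * x := by
  have h3 : √3 ^ 2 = 3 := Real.sq_sqrt (by norm_num)
  have h32 : √3 ≤ 2 := by nlinarith [Real.sqrt_nonneg 3]
  rcases le_or_gt x m with hxm | hmx
  · nlinarith
  -- `6 (x - m)² / x + (12 - 4√3) m - 4x = 2 (x - √3 m)² / x`, and `(x - m)² ≤ y² ≤ x w`.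
  have hxw : (x - m) ^ 2 ≤ x * w := le_trans (pow_le_pow_left₀ (by linarith) (by linarith) 2) hy
  have hsq : (x - √3 * m) ^ 2 = x ^ 2 - 2 * √3 * m * x + 3 * m ^ 2 := by
    linear_combination m ^ 2 * h3
  have key : 0 ≤ (6 * w + (12 - 4 * √3) * m - 4 * x) * x := by
    nlinarith [sq_nonneg (x - √3 * m), hsq]
  nlinarith [nonneg_of_mul_nonneg_left key (by linarith : 0 < x)]

lemma eq_zero_of_forall_mul_add_mul_le {a b : ℝ}
    (h : ∀ c s : ℝ, c ^ 2 + s ^ 2 = 1 → c * a + s * b ≤ a) : b = 0 := by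
  by_contra hb
  have hpos : 0 < a ^ 2 + b ^ 2 := by positivity
  set ρ := √(a ^ 2 + b ^ 2)
  have hρ : 0 < ρ := Real.sqrt_pos.2 hpos
  have hρsq : ρ ^ 2 = a ^ 2 + b ^ 2 := Real.sq_sqrt hpos.le
  have hle := h (a / ρ) (b / ρ) (by field_simp; linarith)
  have hρa : ρ ≤ a := by
    rw [div_mul_eq_mul_div, div_mul_eq_mul_div, ← add_div, div_le_iff₀ hρ] at hle
    nlinarith
  nlinarith [sq_pos_of_ne_zero hb]

lemma rotation_mul_rotation_neg {R : Type*} [Ring R] [Algebra ℝ R] {A B : R}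
    (hA : A * A = A) (hAB : A * B = B) (hBA : B * A = B) (hB : B * B = -A) {c s : ℝ}
    (hcs : c ^ 2 + s ^ 2 = 1) :
    (1 + (c - 1) • A + s • B) * (1 + (c - 1) • A + (-s) • B) = 1 := by
  have h : (1 + (c - 1) • A + s • B) * (1 + (c - 1) • A + (-s) • B) =
      1 + (c ^ 2 + s ^ 2 - 1) • A := by
    simp only [add_mul, mul_add, one_mul, mul_one, smul_mul_assoc, mul_smul_comm, hA, hAB, hBA,
      hB, smul_neg]
    module
  rw [h, hcs, sub_self, zero_smul, add_zero]

section

variable {n : Type*} [Fintype n] [DecidableEq n]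

lemma trace_single_one_mul (i j : n) (S : Matrix n n ℝ) : trace (single i j 1 * S) = S j i := by
  rw [trace, Finset.sum_eq_single i (fun k _ hk => by simp [single_mul_apply_of_ne (h := hk)])
    (by simp)]
  simp [single_mul_apply_same]

noncomputable def givens (i j : n) (c s : ℝ) : Matrix n n ℝ :=
  1 + (c - 1) • (single i i 1 + single j j 1) + s • (single i j 1 - single j i 1)

omit [Fintype n] in
lemma givens_transpose (i j : n) (c s : ℝ) : (givens i j c s)ᵀ = givens i j c (-s) := by
  simp only [givens, transpose_add, transpose_smul, transpose_one, transpose_sub, transpose_single]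
  module

lemma givens_mul_transpose {i j : n} (hij : i ≠ j) {c s : ℝ} (hcs : c ^ 2 + s ^ 2 = 1) :
    givens i j c s * (givens i j c s)ᵀ = 1 := by
  rw [givens_transpose]
  refine rotation_mul_rotation_neg ?_ ?_ ?_ ?_ hcs <;>
    simp only [Matrix.add_mul, Matrix.mul_add, Matrix.sub_mul, Matrix.mul_sub,
      single_mul_single_of_ne _ _ _ _ hij, single_mul_single_of_ne _ _ _ _ hij.symm,
      single_mul_single_same, mul_one] <;>
    abel

lemma trace_givens_mul (i j : n) (c s : ℝ) (S : Matrix n n ℝ) :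
    trace (givens i j c s * S) = trace S + (c - 1) * (S i i + S j j) + s * (S j i - S i j) := by
  simp only [givens, Matrix.add_mul, Matrix.sub_mul, Matrix.one_mul, smul_mul_assoc, trace_add,
    trace_sub, trace_smul, trace_single_one_mul, smul_eq_mul]

noncomputable def householder (v : n → ℝ) : Matrix n n ℝ :=
  1 - (2 / (v ⬝ᵥ v)) • vecMulVec v v

lemma householder_transpose (v : n → ℝ) : (householder v)ᵀ = householder v := by
  simp [householder, transpose_vecMulVec]

lemma householder_mul_self {v : n → ℝ} (hv : v ≠ 0) : householder v * householder v = 1 := by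
  have hvv : v ⬝ᵥ v ≠ 0 := by simpa using hv
  have hsq : vecMulVec v v * vecMulVec v v = (v ⬝ᵥ v) • vecMulVec v v := by
    rw [vecMulVec_mul_vecMulVec, vecMulVec_smul]
  simp only [householder, Matrix.sub_mul, Matrix.mul_sub, Matrix.one_mul, Matrix.mul_one,
    smul_mul_assoc, mul_smul_comm, hsq, smul_smul]
  rw [div_mul_cancel₀ 2 hvv]
  module

lemma trace_householder_mul (v : n → ℝ) (S : Matrix n n ℝ) :
    trace (householder v * S) = trace S - 2 / (v ⬝ᵥ v) * (v ⬝ᵥ S *ᵥ v) := by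
  rw [householder, Matrix.sub_mul, Matrix.one_mul, smul_mul_assoc, trace_sub, trace_smul,
    vecMulVec_mul, trace_vecMulVec, dotProduct_comm v (v ᵥ* S), ← dotProduct_mulVec, smul_eq_mul]

lemma transpose_eq_of_forall_trace_le {S : Matrix n n ℝ}
    (h : ∀ G : Matrix n n ℝ, G * Gᵀ = 1 → trace (G * S) ≤ trace S) : Sᵀ = S := by
  ext i j
  rcases eq_or_ne j i with rfl | hji
  · rfl
  have hb := eq_zero_of_forall_mul_add_mul_le (a := S j j + S i i) (b := S i j - S j i)
    fun c s hcs => by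
      have := h (givens j i c s) (givens_mul_transpose hji hcs)
      rw [trace_givens_mul] at this
      linarith
  rw [transpose_apply]
  linarith

lemma dotProduct_mulVec_nonneg_of_forall_trace_le {S : Matrix n n ℝ}
    (h : ∀ G : Matrix n n ℝ, G * Gᵀ = 1 → trace (G * S) ≤ trace S) (v : n → ℝ) :
    0 ≤ v ⬝ᵥ S *ᵥ v := by
  rcases eq_or_ne v 0 with rfl | hv
  · simp
  have hle := h (householder v) (by rw [householder_transpose, householder_mul_self hv])
  rw [trace_householder_mul] at hle
  have hvv : 0 < v ⬝ᵥ v := by simpa using dotProduct_self_star_pos_iff.2 hv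
  have : 0 ≤ 2 / (v ⬝ᵥ v) * (v ⬝ᵥ S *ᵥ v) := by linarith
  exact nonneg_of_mul_nonneg_right this (by positivity)

lemma posSemidef_of_forall_trace_le {S : Matrix n n ℝ}
    (h : ∀ G : Matrix n n ℝ, G * Gᵀ = 1 → trace (G * S) ≤ trace S) : S.PosSemidef :=
  .of_dotProduct_mulVec_nonneg (isHermitian_iff_isSymm.2 (transpose_eq_of_forall_trace_le h))
    fun v => by simpa using dotProduct_mulVec_nonneg_of_forall_trace_le h v

lemma mul_mul_transpose_eq_one {A B : Matrix n n ℝ} (hA : A * Aᵀ = 1) (hB : B * Bᵀ = 1) :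
    A * B * (A * B)ᵀ = 1 := by
  rw [transpose_mul, Matrix.mul_assoc, ← Matrix.mul_assoc B, hB, Matrix.one_mul, hA]

open scoped ComplexOrder in
lemma Matrix.IsHermitian.posSemidef_sub_smul_one {𝕜 : Type*} [RCLike 𝕜] {A : Matrix n n 𝕜}
    (hA : A.IsHermitian) {c : ℝ} (hc : ∀ i, c ≤ hA.eigenvalues i) :
    (A - (c : 𝕜) • 1).PosSemidef := by
  have hc1 : ((c : 𝕜) • 1 : Matrix n n 𝕜) =
      Unitary.conjStarAlgAut 𝕜 _ hA.eigenvectorUnitary ((c : 𝕜) • 1) := by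
    rw [map_smul, map_one]
  rw [hA.spectral_theorem, hc1, ← map_sub, smul_one_eq_diagonal, diagonal_sub,
    Unitary.conjStarAlgAut_apply, Unitary.isUnit_coe.posSemidef_star_right_conjugate_iff,
    posSemidef_diagonal_iff]
  intro i
  simpa using hc i

end

section

variable {m n : Type*} [Fintype m] [Fintype n]

lemma trace_transpose_mul_sq_le (A B : Matrix m n ℝ) :
    trace (Aᵀ * B) ^ 2 ≤ trace (Aᵀ * A) * trace (Bᵀ * B) := by
  simp only [← vec_dotProduct_vec, dotProduct, ← sq]
  exact Finset.sum_mul_sq_le_sq_mul_sq _ _ _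

lemma trace_transpose_mul_self_mul_nonneg (Δ : Matrix m n ℝ) {S : Matrix n n ℝ}
    (hS : S.PosSemidef) : 0 ≤ trace (Δᵀ * Δ * S) := by
  rw [Matrix.mul_assoc, trace_mul_comm]
  simpa [conjTranspose_eq_transpose_of_trivial] using (hS.mul_mul_conjTranspose_same Δ).trace_nonneg

lemma trace_transpose_mul_transpose_mul_mul_transpose (A B C D : Matrix m n ℝ) :
    trace ((A * Bᵀ)ᵀ * (C * Dᵀ)) = trace (Aᵀ * C * (Dᵀ * B)) := by
  rw [transpose_mul, transpose_transpose, Matrix.mul_assoc, trace_mul_comm]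
  simp only [Matrix.mul_assoc]

lemma three_mul_trace_sq_sub_eq (G S Q : Matrix n n ℝ) :
    3 * (trace (G * G) - 2 * trace (S * S) + trace (Q * Q)) -
        trace ((G - 2 • S + Q) * (G - 2 • S + Q)) =
      6 * trace ((G - S) * (G - S)) + 6 * trace ((G - 2 • S + Q) * Q) -
        4 * trace ((G - 2 • S + Q) * (G - 2 • S + Q)) := by
  simp only [Matrix.add_mul, Matrix.mul_add, Matrix.sub_mul, Matrix.mul_sub, smul_mul_assoc,
    mul_smul_comm, trace_add, trace_sub, trace_smul]
  rw [trace_mul_comm S G, trace_mul_comm Q G, trace_mul_comm Q S]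
  ring

end

section

variable {p q : ℕ}

lemma frob_sq (A : Matrix (Fin p) (Fin q) ℝ) : frob A ^ 2 = trace (Aᵀ * A) := by
  rw [frob, Real.sq_sqrt (by positivity), ← vec_dotProduct_vec]
  simp only [dotProduct, vec, Fintype.sum_prod_type, sq]
  exact Finset.sum_comm

lemma frob_sub_mul_sq (U W : Matrix (Fin p) (Fin q) ℝ) {G : Matrix (Fin q) (Fin q) ℝ}
    (hG : G * Gᵀ = 1) :
    frob (U - W * G) ^ 2 = frob U ^ 2 - 2 * trace (Gᵀ * (Wᵀ * U)) + frob W ^ 2 := by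
  have hcross : trace ((W * G)ᵀ * U) = trace (Gᵀ * (Wᵀ * U)) := by
    rw [transpose_mul, Matrix.mul_assoc]
  have hcross' : trace (Uᵀ * (W * G)) = trace (Gᵀ * (Wᵀ * U)) := by
    rw [← hcross, ← trace_transpose, transpose_mul, transpose_transpose]
  have hsq : trace ((W * G)ᵀ * (W * G)) = trace (Wᵀ * W) := by
    rw [transpose_mul, Matrix.mul_assoc, trace_mul_comm, Matrix.mul_assoc, Matrix.mul_assoc W, hG,
      Matrix.mul_one]
  rw [frob_sq, frob_sq, frob_sq, transpose_sub, Matrix.sub_mul, Matrix.mul_sub, Matrix.mul_sub,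
    trace_sub, trace_sub, trace_sub, hcross, hcross', hsq]
  ring

lemma posSemidef_transpose_mul_of_forall_frob_le {U W : Matrix (Fin p) (Fin q) ℝ}
    (h : ∀ G : Matrix (Fin q) (Fin q) ℝ, G * Gᵀ = 1 → frob (U - W) ≤ frob (U - W * G)) :
    (Wᵀ * U).PosSemidef := by
  refine posSemidef_of_forall_trace_le fun G hG => ?_
  have hGt : Gᵀ * Gᵀᵀ = 1 := by rw [transpose_transpose, mul_eq_one_comm, hG]
  have hle : frob (U - W) ^ 2 ≤ frob (U - W * Gᵀ) ^ 2 :=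
    pow_le_pow_left₀ (Real.sqrt_nonneg _) (h Gᵀ hGt) 2
  have h1 := frob_sub_mul_sq U W (G := 1) (by simp)
  rw [Matrix.mul_one, transpose_one, Matrix.one_mul] at h1
  rw [h1, frob_sub_mul_sq U W hGt, transpose_transpose] at hle
  linarith

lemma frob_mul_transpose_sub_sq (U W : Matrix (Fin p) (Fin q) ℝ) (hS : (Wᵀ * U)ᵀ = Wᵀ * U) :
    frob (U * Uᵀ - W * Wᵀ) ^ 2 =
      trace (Uᵀ * U * (Uᵀ * U)) - 2 * trace (Wᵀ * U * (Wᵀ * U)) + trace (Wᵀ * W * (Wᵀ * W)) := by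
  have hS' : Uᵀ * W = Wᵀ * U := by rw [← hS, transpose_mul, transpose_transpose]
  rw [frob_sq, transpose_sub, Matrix.sub_mul, Matrix.mul_sub, Matrix.mul_sub]
  simp only [trace_sub, trace_transpose_mul_transpose_mul_mul_transpose, hS']
  ring

lemma three_mul_frob_sq_sub_frob_sq (U W : Matrix (Fin p) (Fin q) ℝ)
    (hS : (Wᵀ * U)ᵀ = Wᵀ * U) :
    3 * frob (U * Uᵀ - W * Wᵀ) ^ 2 - frob ((U - W) * (U - W)ᵀ) ^ 2 =
      6 * trace ((Uᵀ * (U - W)) * (Uᵀ * (U - W))) + 6 * trace ((U - W)ᵀ * (U - W) * (Wᵀ * W))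
        - 4 * trace ((U - W)ᵀ * (U - W) * ((U - W)ᵀ * (U - W))) := by
  have hS' : Uᵀ * W = Wᵀ * U := by rw [← hS, transpose_mul, transpose_transpose]
  have hD : Uᵀ * (U - W) = Uᵀ * U - Wᵀ * U := by rw [Matrix.mul_sub, hS']
  have hP : (U - W)ᵀ * (U - W) = Uᵀ * U - 2 • (Wᵀ * U) + Wᵀ * W := by
    rw [transpose_sub, Matrix.sub_mul, Matrix.mul_sub, Matrix.mul_sub, hS']
    module
  rw [frob_mul_transpose_sub_sq U W hS, frob_sq, trace_transpose_mul_transpose_mul_mul_transpose,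
    hD, hP]
  exact three_mul_trace_sq_sub_eq _ _ _

lemma le_three_mul_frob_sq_sub (U W : Matrix (Fin p) (Fin q) ℝ) (σ : ℝ)
    (hS : (Wᵀ * U).PosSemidef) (hQ : (Wᵀ * W - σ • 1).PosSemidef) :
    (4 * √3 - 6) * σ * frob (U - W) ^ 2 ≤
      3 * frob (U * Uᵀ - W * Wᵀ) ^ 2 - frob ((U - W) * (U - W)ᵀ) ^ 2 := by
  have hSsymm : (Wᵀ * U)ᵀ = Wᵀ * U := isHermitian_iff_isSymm.1 hS.1
  rw [three_mul_frob_sq_sub_frob_sq U W hSsymm, frob_sq]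
  set Δ := U - W with hΔ
  set P := Δᵀ * Δ
  set D := Uᵀ * Δ
  set Q := Wᵀ * W
  have hP : Pᵀ = P := by simp [P]
  have hD : Dᵀ = D := by
    have hS' : Uᵀ * W = Wᵀ * U := by rw [← hSsymm, transpose_mul, transpose_transpose]
    simp only [D, hΔ, transpose_mul, transpose_transpose, transpose_sub, Matrix.mul_sub, hS']
  have hw : 0 ≤ trace (Dᵀ * D) := frob_sq D ▸ sq_nonneg _
  rw [hD] at hw
  have hm : 0 ≤ trace (P * Q) := trace_transpose_mul_self_mul_nonneg Δ
    (by simpa [conjTranspose_eq_transpose_of_trivial] using posSemidef_conjTranspose_mul_self W)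
  have hσ : σ * trace P ≤ trace (P * Q) := by
    have h := trace_transpose_mul_self_mul_nonneg Δ hQ
    rw [Matrix.mul_sub, trace_sub, Matrix.mul_smul, Matrix.mul_one, trace_smul, smul_eq_mul] at h
    linarith
  have hxy : trace (P * P) ≤ trace (P * D) + trace (P * Q) := by
    have h := trace_transpose_mul_self_mul_nonneg Δ hS
    have hsplit : Wᵀ * U = D + Q - P := by
      simp only [P, D, Q, hΔ, transpose_sub, Matrix.sub_mul, Matrix.mul_sub]
      abel
    rw [hsplit, Matrix.mul_sub, Matrix.mul_add, trace_sub, trace_add] at h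
    linarith
  have hCS : trace (P * D) ^ 2 ≤ trace (P * P) * trace (D * D) := by
    simpa only [hP, hD] using trace_transpose_mul_sq_le P D
  have hc : 0 ≤ 4 * √3 - 6 := by
    nlinarith [Real.sq_sqrt (show (0 : ℝ) ≤ 3 by norm_num), Real.sqrt_nonneg 3]
  calc (4 * √3 - 6) * σ * trace P = (4 * √3 - 6) * (σ * trace P) := by ring
    _ ≤ (4 * √3 - 6) * trace (P * Q) := mul_le_mul_of_nonneg_left hσ hc
    _ ≤ 6 * trace (D * D) + 6 * trace (P * Q) - 4 * trace (P * P) :=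
      four_sqrt_three_sub_six_mul_le hw hm hxy hCS

end

theorem matrix_factorization_saddle_key_inequality_general {d r : ℕ} (hr : 0 < r)
    (Vs : Matrix (Fin d) (Fin r) ℝ)
    (σr : ℝ)
    (hherm : (Vsᵀ * Vs).IsHermitian)
    (hσr : σr = haveI : Nonempty (Fin r) := Fin.pos_iff_nonempty.mp hr
      ⨅ i, hherm.eigenvalues i)
    (U Us : Matrix (Fin d) (Fin r) ℝ)
    (hUs : ∃ R : Matrix (Fin r) (Fin r) ℝ,
      R * Rᵀ = 1 ∧ Rᵀ * R = 1 ∧ Us = Vs * R)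
    (hproj : ∀ R : Matrix (Fin r) (Fin r) ℝ, R * Rᵀ = 1 → Rᵀ * R = 1 →
      frob (U - Us) ≤ frob (U - Vs * R)) :
    (4 * Real.sqrt 3 - 6) * σr * frob (U - Us) ^ 2 ≤
      3 * frob (U * Uᵀ - Vs * Vsᵀ) ^ 2 - frob ((U - Us) * (U - Us)ᵀ) ^ 2 := by
  obtain ⟨R₀, hR₀, hR₀', rfl⟩ := hUs
  have hS : ((Vs * R₀)ᵀ * U).PosSemidef :=
    posSemidef_transpose_mul_of_forall_frob_le fun G hG => by
      have hR := mul_mul_transpose_eq_one hR₀ hG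
      rw [Matrix.mul_assoc]
      exact hproj (R₀ * G) hR (mul_eq_one_comm.1 hR)
  have hσ : ∀ i, σr ≤ hherm.eigenvalues i := by
    have : Nonempty (Fin r) := Fin.pos_iff_nonempty.mp hr
    intro i
    rw [hσr]
    exact ciInf_le (Set.finite_range _).bddBelow i
  have hQ : ((Vs * R₀)ᵀ * (Vs * R₀) - σr • 1).PosSemidef := by
    have h : (Vsᵀ * Vs - σr • 1).PosSemidef := hherm.posSemidef_sub_smul_one hσ
    have hconj : (Vs * R₀)ᵀ * (Vs * R₀) - σr • 1 = R₀ᴴ * (Vsᵀ * Vs - σr • 1) * R₀ := by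
      simp [conjTranspose_eq_transpose_of_trivial, Matrix.mul_sub, Matrix.sub_mul, hR₀',
        Matrix.mul_assoc]
    rw [hconj]
    exact h.conjTranspose_mul_mul_same R₀
  have hM : Vs * Vsᵀ = Vs * R₀ * (Vs * R₀)ᵀ := by
    rw [transpose_mul, Matrix.mul_assoc, ← Matrix.mul_assoc R₀, hR₀, Matrix.one_mul]
  rw [hM]
  exact le_three_mul_frob_sq_sub U (Vs * R₀) σr hS hQ

/-- Let `M* = V*V*ᵀ` be symmetric PSD of rank `r`, `U*` the closest point of
`U` in `X* = {V*R : R orthogonal}` and `Δ = U - U*`.  Then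
`3‖UUᵀ - M*‖_F² - ‖ΔΔᵀ‖_F² ≥ (4√3 - 6)·σ_r(M*)·‖Δ‖_F²`, where `σ_r(M*)` (the
smallest nonzero singular value of `M*`) equals the smallest eigenvalue of
`V*ᵀV*`. -/
theorem matrix_factorization_saddle_key_inequality {d r : ℕ} (hr : 0 < r)
    (Vs : Matrix (Fin d) (Fin r) ℝ) (hrank : Vs.rank = r)
    (σr : ℝ)
    (hherm : (Vsᵀ * Vs).IsHermitian)
    (hσr : σr = haveI : Nonempty (Fin r) := Fin.pos_iff_nonempty.mp hr
      ⨅ i, hherm.eigenvalues i)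
    (U Us : Matrix (Fin d) (Fin r) ℝ)
    (hUs : ∃ R : Matrix (Fin r) (Fin r) ℝ,
      R * Rᵀ = 1 ∧ Rᵀ * R = 1 ∧ Us = Vs * R)
    (hproj : ∀ R : Matrix (Fin r) (Fin r) ℝ, R * Rᵀ = 1 → Rᵀ * R = 1 →
      frob (U - Us) ≤ frob (U - Vs * R)) :
    (4 * Real.sqrt 3 - 6) * σr * frob (U - Us) ^ 2 ≤
      3 * frob (U * Uᵀ - Vs * Vsᵀ) ^ 2 - frob ((U - Us) * (U - Us)ᵀ) ^ 2 :=
  matrix_factorization_saddle_key_inequality_general hr Vs σr hherm hσr U Us hUs hproj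
end
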